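/- arXiv:1912.03246 — 5 statements merged into one kernel-verified Lean document; each statement's English description precedes it below -/
import Mathlib

section
/- Let A be a commutative ring, I an ideal of A, and hI a divided power structure on I. For all x, y ∈ I and every natural number m, the element hI.dpow (m+1) y − hI.dpow (m+1) x − (hI.dpow m x) · (y − x) lies in the ideal of A generated by the set {hI.dpow l (y − x) : l ≥ 2}. -/
open Finset

namespace DividedPowers

variable {A : Type*} [CommRing A] {I : Ideal A} (hI : DividedPowers I) {x z : A}

theorem dpow_succ_add_sub_sub (hx : x ∈ I) (hz : z ∈ I) (m : ℕ) :
    hI.dpow (m + 1) (x + z) - hI.dpow (m + 1) x - hI.dpow m x * z =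
      ∑ k ∈ range m, hI.dpow k x * hI.dpow (m + 1 - k) z := by
  rw [hI.dpow_add' hx hz, sum_range_succ, sum_range_succ, Nat.sub_self, hI.dpow_zero hz,
    show m + 1 - m = 1 by omega, hI.dpow_one hz]
  ring

theorem sum_dpow_mul_dpow_sub_mem_span (x : A) (m : ℕ) :
    ∑ k ∈ range m, hI.dpow k x * hI.dpow (m + 1 - k) z ∈
      Ideal.span {a : A | ∃ l : ℕ, 2 ≤ l ∧ a = hI.dpow l z} :=
  Ideal.sum_mem _ fun k hk ↦ Ideal.mul_mem_left _ _ <|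
    Ideal.subset_span ⟨m + 1 - k, by rw [mem_range] at hk; omega, rfl⟩

end DividedPowers

theorem dpow_shift_mem_span {A : Type*} [CommRing A] {I : Ideal A}
    (hI : DividedPowers I) {x y : A} (hx : x ∈ I) (hy : y ∈ I) (m : ℕ) :
    hI.dpow (m + 1) y - hI.dpow (m + 1) x - hI.dpow m x * (y - x) ∈
      Ideal.span {a : A | ∃ l : ℕ, 2 ≤ l ∧ a = hI.dpow l (y - x)} := by
  have h := hI.dpow_succ_add_sub_sub hx (I.sub_mem hy hx) m
  rw [add_sub_cancel] at h
  exact h ▸ hI.sum_dpow_mul_dpow_sub_mem_span x m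
end

section
/- Let A be a commutative ring, I an ideal of A, and hI a divided power structure on I. For all x, y ∈ I and all natural numbers l, r with l ≥ 1 and r ≥ 1, the element hI.dpow l x · hI.dpow r y − binom(l+r−1, l−1) · hI.dpow (l+r) x − binom(l+r−1, l) · hI.dpow (l+r) y lies in the ideal of A generated by the set {hI.dpow m (x − y) : m ≥ 2}. -/
/-!
Modulo the ideal `J` spanned by the divided powers `(x - y)^{[k]}`, `k ≥ 2`, the addition formula
applied to `x = (x - y) + y` gives `x^{[m+1]} ≡ y^{[m+1]} + (x - y) y^{[m]}`. Substituting this for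
`x^{[l]}` and for `x^{[l+r]}`, the claim reduces to the product formula for divided powers of `y`
and Pascal's rule.
-/

namespace DividedPowers

variable {A : Type*} [CommRing A] {I : Ideal A} (hI : DividedPowers I)

theorem dpow_add_succ_sub_mem_span {t y : A} (ht : t ∈ I) (hy : y ∈ I) (m : ℕ) :
    hI.dpow (m + 1) (t + y) - hI.dpow (m + 1) y - t * hI.dpow m y ∈
      Ideal.span {a : A | ∃ k : ℕ, 2 ≤ k ∧ a = hI.dpow k t} := by
  have hexpand : hI.dpow (m + 1) (t + y) - hI.dpow (m + 1) y - t * hI.dpow m y =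
      ∑ i ∈ Finset.range m, hI.dpow (i + 2) t * hI.dpow (m + 1 - (i + 2)) y := by
    rw [hI.dpow_add' ht hy, Finset.sum_range_succ', Finset.sum_range_succ', hI.dpow_zero ht,
      hI.dpow_one ht]
    simp only [Nat.add_sub_cancel, Nat.sub_zero, one_mul]
    ring
  rw [hexpand]
  exact Ideal.sum_mem _ fun i _ ↦
    Ideal.mul_mem_right _ _ (Ideal.subset_span ⟨i + 2, by omega, rfl⟩)

theorem dpow_succ_mul_dpow_succ_sub_eq {y : A} (hy : y ∈ I) (x : A) (a b : ℕ) :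
    hI.dpow (a + 1) x * hI.dpow (b + 1) y
        - ((a + b + 1).choose a : A) * hI.dpow (a + b + 2) x
        - ((a + b + 1).choose (a + 1) : A) * hI.dpow (a + b + 2) y =
      (hI.dpow (a + 1) x - hI.dpow (a + 1) y - (x - y) * hI.dpow a y) * hI.dpow (b + 1) y
        - ((a + b + 1).choose a : A) *
          (hI.dpow (a + b + 2) x - hI.dpow (a + b + 2) y - (x - y) * hI.dpow (a + b + 1) y) := by
  have hmul₁ := hI.mul_dpow (m := a + 1) (n := b + 1) hy
  have hmul₀ := hI.mul_dpow (m := a) (n := b + 1) hy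
  rw [show a + 1 + (b + 1) = a + b + 2 by omega, Nat.choose_succ_succ, Nat.cast_add] at hmul₁
  rw [show a + (b + 1) = a + b + 1 by omega] at hmul₀
  linear_combination hmul₁ + (x - y) * hmul₀

end DividedPowers

theorem dpow_mul_dpow_mem_span {A : Type*} [CommRing A] {I : Ideal A}
    (hI : DividedPowers I) {x y : A} (hx : x ∈ I) (hy : y ∈ I)
    {l r : ℕ} (hl : 1 ≤ l) (hr : 1 ≤ r) :
    hI.dpow l x * hI.dpow r y
        - (Nat.choose (l + r - 1) (l - 1) : A) * hI.dpow (l + r) x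
        - (Nat.choose (l + r - 1) l : A) * hI.dpow (l + r) y ∈
      Ideal.span {a : A | ∃ m : ℕ, 2 ≤ m ∧ a = hI.dpow m (x - y)} := by
  obtain ⟨a, rfl⟩ : ∃ a, l = a + 1 := ⟨l - 1, by omega⟩
  obtain ⟨b, rfl⟩ : ∃ b, r = b + 1 := ⟨r - 1, by omega⟩
  have hcongr : ∀ m, hI.dpow (m + 1) x - hI.dpow (m + 1) y - (x - y) * hI.dpow m y ∈
      Ideal.span {c : A | ∃ k : ℕ, 2 ≤ k ∧ c = hI.dpow k (x - y)} := fun m ↦ by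
    simpa only [sub_add_cancel] using hI.dpow_add_succ_sub_mem_span (I.sub_mem hx hy) hy m
  rw [show a + 1 + (b + 1) = a + b + 2 by omega, show a + b + 2 - 1 = a + b + 1 by omega,
    Nat.add_sub_cancel, hI.dpow_succ_mul_dpow_succ_sub_eq hy]
  exact Ideal.sub_mem _ (Ideal.mul_mem_right _ _ (hcongr a))
    (Ideal.mul_mem_left _ _ (hcongr (a + b + 1)))
end

section
/- Let A be a commutative ring, I an ideal of A, and hI a divided power structure on I. For all x, y ∈ I and every natural number m, the element (hI.dpow m x) · y − m · hI.dpow (m+1) x − hI.dpow (m+1) y lies in the ideal of A generated by the set {hI.dpow l (x − y) : l ≥ 2}. -/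
/-!
Write `d = x - y` and work modulo the ideal `J` generated by the `d^{[l]}`, `l ≥ 2`. The addition
formula for `x = d + y` gives `x^{[n+1]} ≡ y^{[n+1]} + d y^{[n]}`, and `y^{[n]} y = (n+1) y^{[n+1]}`.
Substituting both into `x^{[m]} y - m x^{[m+1]}` for `m ≥ 1`, the terms containing `d` cancel and
`y^{[m+1]}` remains.
-/

namespace DividedPowers

variable {A : Type*} [CommRing A] {I : Ideal A} (hI : DividedPowers I)

/-- For `a ∈ I` this is the divided power square of the principal ideal `(a)`. -/
def spanDpowGeTwo (a : A) : Ideal A :=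
  Ideal.span {c : A | ∃ l : ℕ, 2 ≤ l ∧ c = hI.dpow l a}

theorem dpow_mul_self {a : A} (ha : a ∈ I) (n : ℕ) :
    hI.dpow n a * a = (n + 1) * hI.dpow (n + 1) a := by
  nth_rewrite 2 [← hI.dpow_one ha]
  rw [hI.mul_dpow ha, Nat.choose_succ_self_right]
  push_cast
  ring

theorem dpow_add_sub_mem_spanDpowGeTwo {a b : A} (ha : a ∈ I) (hb : b ∈ I) (n : ℕ) :
    hI.dpow (n + 1) (a + b) - (hI.dpow (n + 1) b + a * hI.dpow n b) ∈ hI.spanDpowGeTwo a := by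
  rw [hI.dpow_add' ha hb, Finset.sum_range_succ', Finset.sum_range_succ', hI.dpow_zero ha,
    hI.dpow_one ha, Nat.sub_zero, Nat.add_sub_cancel, one_mul, add_assoc, add_comm (a * _),
    add_sub_cancel_right]
  exact Ideal.sum_mem _ fun i _ ↦ Ideal.mul_mem_right _ _ (Ideal.subset_span ⟨i + 2, by omega, rfl⟩)

end DividedPowers

theorem dpow_mul_self_mem_span {A : Type*} [CommRing A] {I : Ideal A}
    (hI : DividedPowers I) {x y : A} (hx : x ∈ I) (hy : y ∈ I) (m : ℕ) :
    hI.dpow m x * y - (m : A) * hI.dpow (m + 1) x - hI.dpow (m + 1) y ∈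
      Ideal.span {a : A | ∃ l : ℕ, 2 ≤ l ∧ a = hI.dpow l (x - y)} := by
  rcases m with _ | k
  · simp [hI.dpow_zero hx, hI.dpow_one hy]
  change _ ∈ hI.spanDpowGeTwo (x - y)
  have expand (n : ℕ) :=
    Ideal.Quotient.eq.mpr (hI.dpow_add_sub_mem_spanDpowGeTwo (I.sub_mem hx hy) hy n)
  have mul_self (n : ℕ) :=
    congrArg (Ideal.Quotient.mk (hI.spanDpowGeTwo (x - y))) (hI.dpow_mul_self hy n)
  rw [← Ideal.Quotient.eq_zero_iff_mem]
  simp only [sub_add_cancel, map_add, map_sub, map_mul, map_natCast, map_one] at expand mul_self ⊢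
  linear_combination (norm := (push_cast; ring))
    y * expand k - (k + 1) * expand (k + 1) + mul_self (k + 1) + (x - y) * mul_self k
end

section
/- Let A be a commutative ring, I an ideal of A, hI a divided power structure on I, and x : Fin k → A a family of elements of I. Let K be the ideal of A generated by the set {hI.dpow m (x i − x j) : i, j ∈ Fin k, m ≥ 2}, and let S be the additive subgroup of A generated by 1 together with all elements hI.dpow m (x i) for i ∈ Fin k and m ≥ 1. Then the subring of A generated by the set {hI.dpow m (x i) : i ∈ Fin k, m ≥ 1} is contained in the sum S + K (sum of additive subgroups of A). -/
/-!
Modulo the ideal `K`, the addition formula applied to `x i = x j + (x i - x j)` gives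
`(x i)^{[s+1]} ≡ (x j)^{[s+1]} + (x j)^{[s]} (x i - x j)`. Hence every `(x j)^{[s]} (x i - x j)`
lies in `S + K`, and a mixed product `(x j)^{[l]} (x i)^{[r+1]}` is congruent to
`(x j)^{[l]} (x j)^{[r+1]} + (x j)^{[l]} (x j)^{[r]} (x i - x j)`, which by the product formula
`x^{[l]} x^{[r]} = binom(l+r, l) x^{[l+r]}` also lies in `S + K`. So `S + K` is closed under
multiplication, and being an additive group containing `1` and the generators, it contains the
subring they generate.
-/

open Pointwise

section ClosureLemmas

variable {R : Type*}

theorem AddSubgroup.mul_mem_of_mul_mem_of_mem_closure [NonUnitalNonAssocRing R] {T : Set R}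
    {M : AddSubgroup R} (hT : ∀ a ∈ T, ∀ b ∈ T, a * b ∈ M) {a b : R}
    (ha : a ∈ AddSubgroup.closure T) (hb : b ∈ AddSubgroup.closure T) : a * b ∈ M := by
  induction ha, hb using AddSubgroup.closure_induction₂ with
  | mem a b ha hb => exact hT a ha b hb
  | zero_left => simp
  | zero_right => simp
  | add_left _ _ _ _ _ _ h₁ h₂ => simpa [add_mul] using add_mem h₁ h₂
  | add_right _ _ _ _ _ _ h₁ h₂ => simpa [mul_add] using add_mem h₁ h₂
  | neg_left _ _ _ _ h => simpa [neg_mul] using neg_mem h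
  | neg_right _ _ _ _ h => simpa [mul_neg] using neg_mem h

theorem AddSubgroup.mul_mem_sup_ideal [CommRing R] {S : AddSubgroup R} {K : Ideal R}
    (hS : ∀ a ∈ S, ∀ b ∈ S, a * b ∈ S ⊔ K.toAddSubgroup) {a b : R}
    (ha : a ∈ S ⊔ K.toAddSubgroup) (hb : b ∈ S ⊔ K.toAddSubgroup) :
    a * b ∈ S ⊔ K.toAddSubgroup := by
  obtain ⟨s, hs, κ, hκ, rfl⟩ := AddSubgroup.mem_sup.mp ha
  obtain ⟨s', hs', κ', hκ', rfl⟩ := AddSubgroup.mem_sup.mp hb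
  have hK : s * κ' + κ * (s' + κ') ∈ K := K.add_mem (K.mul_mem_left _ hκ') (K.mul_mem_right _ hκ)
  rw [show (s + κ) * (s' + κ') = s * s' + (s * κ' + κ * (s' + κ')) by ring]
  exact add_mem (hS s hs s' hs') (AddSubgroup.mem_sup_right hK)

theorem Subring.closure_subset_of_addSubgroup [Ring R] {G : Set R} {M : AddSubgroup R}
    (hG : G ⊆ M) (h1 : (1 : R) ∈ M) (hmul : ∀ a ∈ M, ∀ b ∈ M, a * b ∈ M) :
    (Subring.closure G : Set R) ⊆ M :=
  Subring.closure_le (t := { M with one_mem' := h1, mul_mem' := fun ha hb => hmul _ ha _ hb }).mpr hG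

theorem Subring.closure_subset_closure_add_ideal [CommRing R] {G : Set R} {K : Ideal R}
    (hG : ∀ a ∈ G, ∀ b ∈ G, a * b ∈ AddSubgroup.closure ({1} ∪ G) ⊔ K.toAddSubgroup) :
    (Subring.closure G : Set R) ⊆ (AddSubgroup.closure ({1} ∪ G) : Set R) + (K : Set R) := by
  set S := AddSubgroup.closure ({1} ∪ G)
  have hS : {1} ∪ G ⊆ (S ⊔ K.toAddSubgroup : AddSubgroup R) :=
    AddSubgroup.subset_closure.trans (SetLike.coe_subset_coe.mpr le_sup_left)
  have hgen : ∀ a ∈ {1} ∪ G, ∀ b ∈ {1} ∪ G, a * b ∈ S ⊔ K.toAddSubgroup := by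
    rintro a (rfl | ha) b (rfl | hb)
    · simpa using hS (Or.inl rfl)
    · simpa using hS (Or.inr hb)
    · simpa using hS (Or.inr ha)
    · exact hG a ha b hb
  have hSS : ∀ a ∈ S, ∀ b ∈ S, a * b ∈ S ⊔ K.toAddSubgroup := fun a ha b hb =>
    AddSubgroup.mul_mem_of_mul_mem_of_mem_closure hgen ha hb
  change _ ⊆ (S : Set R) + (K.toAddSubgroup : Set R)
  rw [← AddSubgroup.add_normal]
  exact Subring.closure_subset_of_addSubgroup (Set.subset_union_right.trans hS) (hS (Or.inl rfl))
    (fun a ha b hb => AddSubgroup.mul_mem_sup_ideal hSS ha hb)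

end ClosureLemmas

namespace DividedPowers

variable {A : Type*} [CommRing A] {I : Ideal A} (hI : DividedPowers I) {J : Ideal A} {x y : A}

theorem dpow_succ_smodEq (hx : x ∈ I) (hy : y ∈ I)
    (hJ : ∀ m, 2 ≤ m → hI.dpow m (y - x) ∈ J) (s : ℕ) :
    hI.dpow (s + 1) y ≡ hI.dpow (s + 1) x + hI.dpow s x * (y - x) [SMOD J] := by
  have hyx : y - x ∈ I := I.sub_mem hy hx
  have hadd := hI.dpow_add' (n := s + 1) hx hyx
  rw [add_sub_cancel, Finset.sum_range_succ, Finset.sum_range_succ, Nat.sub_self,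
    Nat.add_sub_cancel_left, hI.dpow_zero hyx, hI.dpow_one hyx, mul_one] at hadd
  rw [SModEq.sub_mem, hadd]
  convert J.sum_mem (t := Finset.range s) fun l hl => J.mul_mem_left (hI.dpow l x) <|
    hJ (s + 1 - l) (by have := Finset.mem_range.mp hl; omega) using 1
  ring

theorem dpow_mul_dpow_mem {M : AddSubgroup A} (hx : x ∈ I) (hy : y ∈ I)
    (hJM : J.toAddSubgroup ≤ M) (hxM : ∀ m, 1 ≤ m → hI.dpow m x ∈ M)
    (hyM : ∀ m, 1 ≤ m → hI.dpow m y ∈ M) (hJ : ∀ m, 2 ≤ m → hI.dpow m (y - x) ∈ J)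
    (l : ℕ) {r : ℕ} (hr : 1 ≤ r) : hI.dpow l x * hI.dpow r y ∈ M := by
  have hcong s := SModEq.sub_mem.mp (hI.dpow_succ_smodEq hx hy hJ s)
  have hlin s : hI.dpow s x * (y - x) ∈ M := by
    convert sub_mem (sub_mem (hyM (s + 1) le_add_self) (hxM (s + 1) le_add_self))
      (hJM (hcong s)) using 1
    ring
  obtain ⟨r, rfl⟩ := Nat.exists_eq_add_of_le' hr
  have hdecomp : hI.dpow l x * hI.dpow (r + 1) y =
      hI.dpow l x * hI.dpow (r + 1) x + hI.dpow l x * hI.dpow r x * (y - x)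
        + hI.dpow l x * (hI.dpow (r + 1) y - (hI.dpow (r + 1) x + hI.dpow r x * (y - x))) := by
    ring
  rw [hdecomp, hI.mul_dpow hx, hI.mul_dpow hx, mul_assoc, ← nsmul_eq_mul, ← nsmul_eq_mul]
  exact add_mem (add_mem (nsmul_mem (hxM _ (by omega)) _) (nsmul_mem (hlin _) _))
    (hJM (J.mul_mem_left _ (hcong r)))

end DividedPowers

theorem subring_closure_dpow_subset {A : Type*} [CommRing A] {I : Ideal A}
    (hI : DividedPowers I) {k : ℕ} (x : Fin k → A) (hx : ∀ i, x i ∈ I) :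
    let K : Ideal A :=
      Ideal.span {a : A | ∃ i j : Fin k, ∃ m : ℕ, 2 ≤ m ∧ a = hI.dpow m (x i - x j)}
    let S : AddSubgroup A :=
      AddSubgroup.closure ({1} ∪ {a : A | ∃ i : Fin k, ∃ m : ℕ, 1 ≤ m ∧ a = hI.dpow m (x i)})
    (Subring.closure {a : A | ∃ i : Fin k, ∃ m : ℕ, 1 ≤ m ∧ a = hI.dpow m (x i)} : Set A) ⊆
      (S : Set A) + (K : Set A) := by
  intro K S
  refine Subring.closure_subset_closure_add_ideal ?_
  rintro _ ⟨i, l, -, rfl⟩ _ ⟨j, r, hr, rfl⟩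
  have hpure i m (hm : 1 ≤ m) : hI.dpow m (x i) ∈ S ⊔ K.toAddSubgroup :=
    AddSubgroup.mem_sup_left (AddSubgroup.subset_closure (Or.inr ⟨i, m, hm, rfl⟩))
  exact hI.dpow_mul_dpow_mem (hx i) (hx j) le_sup_right (hpure i) (hpure j)
    (fun m hm => Ideal.subset_span ⟨j, i, m, hm, rfl⟩) l hr
end

section
/- For every natural number n, the 2-adic norm of the element 2^(2^n) / (2^n)! of ℚ_2 equals 1/2. -/
/-! Legendre's formula `(p - 1) v_p(m!) = m - s_p(m)`, with base-`p` digit sum `s_p(p ^ k) = 1`,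
gives `v_2((2 ^ n)!) = 2 ^ n - 1`, so `2 ^ (2 ^ n) / (2 ^ n)!` has 2-adic valuation exactly `1`. -/

open Nat

theorem sub_one_mul_padicValNat_factorial_pow (p : ℕ) [hp : Fact p.Prime] (k : ℕ) :
    (p - 1) * padicValNat p (p ^ k)! = p ^ k - 1 := by
  rw [sub_one_mul_padicValNat_factorial, ← mul_one (p ^ k),
    digits_base_pow_mul hp.out.one_lt one_pos, digits_of_lt p 1 one_ne_zero hp.out.one_lt]
  simp

theorem padicValNat_two_factorial_two_pow (k : ℕ) : padicValNat 2 (2 ^ k)! = 2 ^ k - 1 := by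
  simpa using sub_one_mul_padicValNat_factorial_pow 2 k

theorem Padic.norm_p_pow_div_natCast {p : ℕ} [Fact p.Prime] (k : ℕ) {m : ℕ} (hm : m ≠ 0) :
    ‖(p : ℚ_[p]) ^ k / m‖ = (p : ℝ) ^ ((padicValNat p m : ℤ) - k) := by
  have hp : (p : ℝ) ≠ 0 := mod_cast (Fact.out : p.Prime).ne_zero
  rw [norm_div, norm_p_pow, norm_eq_zpow_neg_valuation (mod_cast hm), valuation_natCast,
    ← zpow_sub₀ hp]
  ring_nf

theorem norm_two_pow_div_factorial (n : ℕ) :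
    ‖((2 : ℚ_[2]) ^ (2 ^ n) / ((2 ^ n)! : ℚ_[2]))‖ = 1 / 2 := by
  have hnorm := Padic.norm_p_pow_div_natCast (p := 2) (2 ^ n) (factorial_ne_zero (2 ^ n))
  have hexp : ((2 ^ n - 1 : ℕ) : ℤ) - (2 ^ n : ℕ) = -1 := by
    have := Nat.one_le_two_pow (n := n)
    omega
  rw [padicValNat_two_factorial_two_pow, hexp] at hnorm
  simp only [Nat.cast_ofNat] at hnorm
  rw [hnorm]
  norm_num
end
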